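/- For every integer n ≥ 2, the ladder L_n is a super totally antimagic total graph, i.e. there exists a bijection f : V(L_n) ∪ E(L_n) → {1,...,5n−2} with f(V(L_n))={1,...,2n} such that all edge-weights are pairwise distinct and all vertex-weights are pairwise distinct. -/
import Mathlib


open Sum

/-- The weight of an edge `e` under a total labeling `f` of the graph `G`:
the label of `e` plus the labels of its two endpoints. -/
noncomputable def edgeWt {V : Type*} (G : SimpleGraph V) (f : V ⊕ G.edgeSet → ℕ)
    (e : G.edgeSet) : ℕ :=
  f (inr e) + ∑ᶠ (v : V) (_ : v ∈ (e : Sym2 V)), f (inl v)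

/-- The weight of a vertex `v` under a total labeling `f` of the graph `G`:
the label of `v` plus the labels of all edges incident with `v`. -/
noncomputable def vertexWt {V : Type*} (G : SimpleGraph V) (f : V ⊕ G.edgeSet → ℕ)
    (v : V) : ℕ :=
  f (inl v) + ∑ᶠ (e : G.edgeSet) (_ : v ∈ (e : Sym2 V)), f (inr e)

/-- The ladder `L_n = P_n × P_2`, with vertices `u_i = inl i` and `v_i = inr i`
(`i` running over `Fin n`), edges `u_i u_{i+1}`, `v_i v_{i+1}` and rungs `u_i v_i`. -/
def ladder (n : ℕ) : SimpleGraph (Fin n ⊕ Fin n) :=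
  SimpleGraph.fromRel (fun a b =>
    (∃ p q : Fin n, (p : ℕ) + 1 = (q : ℕ) ∧ a = inl p ∧ b = inl q) ∨
    (∃ p q : Fin n, (p : ℕ) + 1 = (q : ℕ) ∧ a = inr p ∧ b = inr q) ∨
    (∃ p : Fin n, a = inl p ∧ b = inr p))

set_option linter.unreachableTactic false
set_option linter.unusedTactic false

def uL (n i : ℕ) : ℕ := n - i
def vL (n i : ℕ) : ℕ := n + 1 + i
def sL (n i : ℕ) : ℕ := 2*n + 1 + i
def rL (n i : ℕ) : ℕ := if n = 2 then 3*n + 2*i else 3*n + i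
def tL (n i : ℕ) : ℕ := if n = 2 then 4*n + i - 1 else 4*n + i

def hL (n : ℕ) : (Fin n ⊕ Fin n) → (Fin n ⊕ Fin n) → ℕ
  | inl p, inl q => sL n (min p.val q.val)
  | inr p, inr q => tL n (min p.val q.val)
  | inl p, inr _ => rL n p.val
  | inr _, inl q => rL n q.val

lemma hL_symm (n : ℕ) : ∀ x y, hL n x y = hL n y x := by
  rintro (p|p) (q|q) <;> simp [hL, Nat.min_comm]

def gL (n : ℕ) : Sym2 (Fin n ⊕ Fin n) → ℕ := Sym2.lift ⟨hL n, hL_symm n⟩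

def fL (n : ℕ) : (Fin n ⊕ Fin n) ⊕ (ladder n).edgeSet → ℕ :=
  Sum.elim (Sum.elim (fun i => uL n i.val) fun i => vL n i.val) fun e => gL n e.val

@[simp] lemma fL_u (n : ℕ) (i : Fin n) : fL n (inl (inl i)) = uL n i.val := rfl
@[simp] lemma fL_v (n : ℕ) (i : Fin n) : fL n (inl (inr i)) = vL n i.val := rfl
@[simp] lemma fL_e (n : ℕ) (e : (ladder n).edgeSet) : fL n (inr e) = gL n e.val := rfl
@[simp] lemma gL_uu (n : ℕ) (p q : Fin n) : gL n s(inl p, inl q) = sL n (min p.val q.val) := rfl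
@[simp] lemma gL_vv (n : ℕ) (p q : Fin n) : gL n s(inr p, inr q) = tL n (min p.val q.val) := rfl
@[simp] lemma gL_uv (n : ℕ) (p q : Fin n) : gL n s(inl p, inr q) = rL n p.val := rfl

lemma adj_uu {n : ℕ} {p q : Fin n} (h : (p:ℕ)+1 = q) : (ladder n).Adj (inl p) (inl q) := by
  rw [ladder, SimpleGraph.fromRel_adj]
  refine ⟨fun hc => ?_, Or.inl (Or.inl ⟨p, q, h, rfl, rfl⟩)⟩
  rw [inl.injEq] at hc; subst hc; omega

lemma adj_vv {n : ℕ} {p q : Fin n} (h : (p:ℕ)+1 = q) : (ladder n).Adj (inr p) (inr q) := by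
  rw [ladder, SimpleGraph.fromRel_adj]
  refine ⟨fun hc => ?_, Or.inl (Or.inr (Or.inl ⟨p, q, h, rfl, rfl⟩))⟩
  rw [inr.injEq] at hc; subst hc; omega

lemma adj_uv {n : ℕ} {p : Fin n} : (ladder n).Adj (inl p) (inr p) := by
  rw [ladder, SimpleGraph.fromRel_adj]
  exact ⟨fun hc => by simp at hc, Or.inl (Or.inr (Or.inr ⟨p, rfl, rfl⟩))⟩

lemma edge_char {n : ℕ} {z : Sym2 (Fin n ⊕ Fin n)} (hz : z ∈ (ladder n).edgeSet) :
    (∃ p q : Fin n, (p:ℕ)+1 = q ∧ z = s(inl p, inl q)) ∨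
    (∃ p q : Fin n, (p:ℕ)+1 = q ∧ z = s(inr p, inr q)) ∨
    (∃ p : Fin n, z = s(inl p, inr p)) := by
  induction z using Sym2.ind with
  | _ x y =>
    rw [SimpleGraph.mem_edgeSet, ladder, SimpleGraph.fromRel_adj] at hz
    obtain ⟨-, h | h⟩ := hz
    · rcases h with ⟨p,q,hpq,rfl,rfl⟩|⟨p,q,hpq,rfl,rfl⟩|⟨p,rfl,rfl⟩
      · exact Or.inl ⟨p, q, hpq, rfl⟩
      · exact Or.inr (Or.inl ⟨p, q, hpq, rfl⟩)
      · exact Or.inr (Or.inr ⟨p, rfl⟩)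
    · rcases h with ⟨p,q,hpq,rfl,rfl⟩|⟨p,q,hpq,rfl,rfl⟩|⟨p,rfl,rfl⟩
      · exact Or.inl ⟨p, q, hpq, Sym2.eq_swap⟩
      · exact Or.inr (Or.inl ⟨p, q, hpq, Sym2.eq_swap⟩)
      · exact Or.inr (Or.inr ⟨p, Sym2.eq_swap⟩)

lemma finsum_Prop_congr {α : Type*} {P Q : α → Prop} (f : α → ℕ) (h : ∀ a, P a ↔ Q a) :
    (∑ᶠ (a) (_ : P a), f a) = ∑ᶠ (a) (_ : Q a), f a := by
  have hPQ : P = Q := funext fun a => propext (h a)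
  subst hPQ; rfl

lemma finsum_cond_and {α : Type*} (P Q : α → Prop) (f : α → ℕ) :
    (∑ᶠ (a) (_ : P a) (_ : Q a), f a) = ∑ᶠ (a) (_ : P a ∧ Q a), f a := by
  refine finsum_congr fun a => ?_
  classical
  by_cases hp : P a <;> by_cases hq : Q a <;> simp [finsum_eq_if, hp, hq]

lemma edgeWt_gen {V : Type*} (G : SimpleGraph V) (f : V ⊕ G.edgeSet → ℕ)
    (e : G.edgeSet) {x y : V} (hxy : x ≠ y) (hv : (e : Sym2 V) = s(x, y)) :
    edgeWt G f e = f (inr e) + (f (inl x) + f (inl y)) := by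
  rw [edgeWt]
  congr 1
  simp only [hv]
  rw [finsum_Prop_congr (fun v => f (inl v)) (fun a => by
    rw [Sym2.mem_iff]; simp [Set.mem_insert_iff] : ∀ a, a ∈ s(x,y) ↔ a ∈ ({x, y} : Set V))]
  exact finsum_mem_pair hxy

lemma vertexWt_gen {V : Type*} (G : SimpleGraph V) (f : V ⊕ G.edgeSet → ℕ)
    (g : Sym2 V → ℕ) (hg : ∀ e : G.edgeSet, f (inr e) = g e)
    (v : V) (S : Finset (Sym2 V))
    (hS : ∀ z, (z ∈ G.edgeSet ∧ v ∈ z) ↔ z ∈ S) :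
    vertexWt G f v = f (inl v) + ∑ z ∈ S, g z := by
  rw [vertexWt]
  congr 1
  have h1 : (∑ᶠ (e : G.edgeSet) (_ : v ∈ (e : Sym2 V)), f (inr e))
      = ∑ᶠ (e : G.edgeSet) (_ : v ∈ (e : Sym2 V)), g e :=
    finsum_congr fun e => by rw [hg e]
  rw [h1]
  have h2 : (∑ᶠ (e : G.edgeSet) (_ : v ∈ (e : Sym2 V)), g e)
      = ∑ᶠ (z : Sym2 V) (_ : z ∈ G.edgeSet) (_ : v ∈ z), g z :=
    finsum_subtype_eq_finsum_cond (f := fun z => ∑ᶠ (_ : v ∈ z), g z) (fun z => z ∈ G.edgeSet)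
  rw [h2, finsum_cond_and]
  rw [finsum_Prop_congr g (fun z => (hS z).trans (Finset.mem_coe.symm))]
  exact finsum_mem_coe_finset g S


lemma vwt_u (n : ℕ) (hn : 2 ≤ n) (i : Fin n) :
    vertexWt (ladder n) (fL n) (inl i) =
      uL n i.val + (rL n i.val + (if (i:ℕ) = 0 then 0 else sL n ((i:ℕ)-1))
        + (if (i:ℕ) = n-1 then 0 else sL n i.val)) := by
  rcases Nat.eq_zero_or_pos i.val with hi0 | hi0
  · -- first vertex
    have hilast : (i:ℕ) ≠ n-1 := by omega
    set ip : Fin n := ⟨(i:ℕ)+1, by omega⟩ with hip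
    have hS : ∀ z, (z ∈ (ladder n).edgeSet ∧ (inl i : Fin n ⊕ Fin n) ∈ z) ↔
        z ∈ ({s(inl i, inl ip), s(inl i, inr i)} : Finset (Sym2 (Fin n ⊕ Fin n))) := by
      intro z
      constructor
      · rintro ⟨hz, hv⟩
        rcases edge_char hz with ⟨p,q,hpq,rfl⟩|⟨p,q,hpq,rfl⟩|⟨p,rfl⟩
        · rw [Sym2.mem_iff] at hv
          rcases hv with h|h <;> rw [inl.injEq] at h
          · subst h
            have hq : q = ip := Fin.ext (by simp [hip]; omega)
            subst hq; simp
          · subst h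
            exfalso; omega
        · rw [Sym2.mem_iff] at hv; rcases hv with h|h <;> simp at h
        · rw [Sym2.mem_iff] at hv
          rcases hv with h|h
          · rw [inl.injEq] at h; subst h; simp
          · simp at h
      · intro hz
        rw [Finset.mem_insert, Finset.mem_singleton] at hz
        rcases hz with rfl|rfl
        · exact ⟨(SimpleGraph.mem_edgeSet _).mpr (adj_uu (by simp [hip])), by
            rw [Sym2.mem_iff]; left; rfl⟩
        · exact ⟨(SimpleGraph.mem_edgeSet _).mpr adj_uv, by rw [Sym2.mem_iff]; left; rfl⟩
    rw [vertexWt_gen (ladder n) (fL n) (gL n) (fun e => rfl) _ _ hS]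
    have hne : s(inl i, inl ip) ≠ s(inl i, (inr i : Fin n ⊕ Fin n)) := by
      simp [Sym2.eq_iff]
    rw [Finset.sum_pair hne]
    simp only [fL_u, gL_uu, gL_uv, if_pos hi0, if_neg hilast, hip, Fin.val_mk]
    rw [Nat.min_eq_left (by omega)]
    ring
  · rcases Nat.lt_or_ge i.val (n-1) with hilast | hilast
    · -- middle vertex
      have hi0' : (i:ℕ) ≠ 0 := by omega
      have hil' : (i:ℕ) ≠ n-1 := by omega
      set im : Fin n := ⟨(i:ℕ)-1, by omega⟩ with him
      set ip : Fin n := ⟨(i:ℕ)+1, by omega⟩ with hip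
      have hS : ∀ z, (z ∈ (ladder n).edgeSet ∧ (inl i : Fin n ⊕ Fin n) ∈ z) ↔
          z ∈ ({s(inl im, inl i), s(inl i, inl ip), s(inl i, inr i)} :
            Finset (Sym2 (Fin n ⊕ Fin n))) := by
        intro z
        constructor
        · rintro ⟨hz, hv⟩
          rcases edge_char hz with ⟨p,q,hpq,rfl⟩|⟨p,q,hpq,rfl⟩|⟨p,rfl⟩
          · rw [Sym2.mem_iff] at hv
            rcases hv with h|h <;> rw [inl.injEq] at h <;> subst h
            · have hq : q = ip := Fin.ext (by simp [hip]; omega)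
              subst hq; simp
            · have hp : p = im := Fin.ext (by simp [him]; omega)
              subst hp; simp
          · rw [Sym2.mem_iff] at hv; rcases hv with h|h <;> simp at h
          · rw [Sym2.mem_iff] at hv
            rcases hv with h|h
            · rw [inl.injEq] at h; subst h; simp
            · simp at h
        · intro hz
          rw [Finset.mem_insert, Finset.mem_insert, Finset.mem_singleton] at hz
          rcases hz with rfl|rfl|rfl
          · exact ⟨(SimpleGraph.mem_edgeSet _).mpr (adj_uu (by simp [him]; omega)), by
              rw [Sym2.mem_iff]; right; rfl⟩
          · exact ⟨(SimpleGraph.mem_edgeSet _).mpr (adj_uu (by simp [hip])), by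
              rw [Sym2.mem_iff]; left; rfl⟩
          · exact ⟨(SimpleGraph.mem_edgeSet _).mpr adj_uv, by rw [Sym2.mem_iff]; left; rfl⟩
      rw [vertexWt_gen (ladder n) (fL n) (gL n) (fun e => rfl) _ _ hS]
      have h1 : s(inl im, (inl i : Fin n ⊕ Fin n)) ∉
          ({s(inl i, inl ip), s(inl i, inr i)} : Finset (Sym2 (Fin n ⊕ Fin n))) := by
        simp [Sym2.eq_iff, him, hip, Fin.ext_iff] <;> omega
      have h2 : s(inl i, (inl ip : Fin n ⊕ Fin n)) ∉
          ({s(inl i, inr i)} : Finset (Sym2 (Fin n ⊕ Fin n))) := by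
        simp [Sym2.eq_iff]
      rw [Finset.sum_insert h1, Finset.sum_insert h2, Finset.sum_singleton]
      simp only [fL_u, gL_uu, gL_uv, if_neg hi0', if_neg hil', him, hip, Fin.val_mk]
      rw [Nat.min_eq_left (by omega), Nat.min_eq_left (by omega)]
      ring
    · -- last vertex
      have hil : (i:ℕ) = n-1 := by omega
      have hi0' : (i:ℕ) ≠ 0 := by omega
      set im : Fin n := ⟨(i:ℕ)-1, by omega⟩ with him
      have hS : ∀ z, (z ∈ (ladder n).edgeSet ∧ (inl i : Fin n ⊕ Fin n) ∈ z) ↔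
          z ∈ ({s(inl im, inl i), s(inl i, inr i)} : Finset (Sym2 (Fin n ⊕ Fin n))) := by
        intro z
        constructor
        · rintro ⟨hz, hv⟩
          rcases edge_char hz with ⟨p,q,hpq,rfl⟩|⟨p,q,hpq,rfl⟩|⟨p,rfl⟩
          · rw [Sym2.mem_iff] at hv
            rcases hv with h|h <;> rw [inl.injEq] at h <;> subst h
            · exfalso; omega
            · have hp : p = im := Fin.ext (by simp [him]; omega)
              subst hp; simp
          · rw [Sym2.mem_iff] at hv; rcases hv with h|h <;> simp at h
          · rw [Sym2.mem_iff] at hv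
            rcases hv with h|h
            · rw [inl.injEq] at h; subst h; simp
            · simp at h
        · intro hz
          rw [Finset.mem_insert, Finset.mem_singleton] at hz
          rcases hz with rfl|rfl
          · exact ⟨(SimpleGraph.mem_edgeSet _).mpr (adj_uu (by simp [him]; omega)), by
              rw [Sym2.mem_iff]; right; rfl⟩
          · exact ⟨(SimpleGraph.mem_edgeSet _).mpr adj_uv, by rw [Sym2.mem_iff]; left; rfl⟩
      rw [vertexWt_gen (ladder n) (fL n) (gL n) (fun e => rfl) _ _ hS]
      have hne : s(inl im, (inl i : Fin n ⊕ Fin n)) ≠ s(inl i, inr i) := by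
        simp [Sym2.eq_iff]
      rw [Finset.sum_pair hne]
      simp only [fL_u, gL_uu, gL_uv, if_neg hi0', if_pos hil, him, Fin.val_mk]
      rw [Nat.min_eq_left (by omega)]
      ring

lemma vwt_v (n : ℕ) (hn : 2 ≤ n) (i : Fin n) :
    vertexWt (ladder n) (fL n) (inr i) =
      vL n i.val + (rL n i.val + (if (i:ℕ) = 0 then 0 else tL n ((i:ℕ)-1))
        + (if (i:ℕ) = n-1 then 0 else tL n i.val)) := by
  rcases Nat.eq_zero_or_pos i.val with hi0 | hi0
  · -- first vertex
    have hilast : (i:ℕ) ≠ n-1 := by omega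
    set ip : Fin n := ⟨(i:ℕ)+1, by omega⟩ with hip
    have hS : ∀ z, (z ∈ (ladder n).edgeSet ∧ (inr i : Fin n ⊕ Fin n) ∈ z) ↔
        z ∈ ({s(inr i, inr ip), s(inl i, inr i)} : Finset (Sym2 (Fin n ⊕ Fin n))) := by
      intro z
      constructor
      · rintro ⟨hz, hv⟩
        rcases edge_char hz with ⟨p,q,hpq,rfl⟩|⟨p,q,hpq,rfl⟩|⟨p,rfl⟩
        · rw [Sym2.mem_iff] at hv; rcases hv with h|h <;> simp at h
        · rw [Sym2.mem_iff] at hv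
          rcases hv with h|h <;> rw [inr.injEq] at h
          · subst h
            have hq : q = ip := Fin.ext (by simp [hip]; omega)
            subst hq; simp
          · subst h
            exfalso; omega
        · rw [Sym2.mem_iff] at hv
          rcases hv with h|h
          · simp at h
          · rw [inr.injEq] at h; subst h; simp
      · intro hz
        rw [Finset.mem_insert, Finset.mem_singleton] at hz
        rcases hz with rfl|rfl
        · exact ⟨(SimpleGraph.mem_edgeSet _).mpr (adj_vv (by simp [hip])), by
            rw [Sym2.mem_iff]; left; rfl⟩
        · exact ⟨(SimpleGraph.mem_edgeSet _).mpr adj_uv, by rw [Sym2.mem_iff]; right; rfl⟩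
    rw [vertexWt_gen (ladder n) (fL n) (gL n) (fun e => rfl) _ _ hS]
    have hne : s(inr i, inr ip) ≠ s(inl i, (inr i : Fin n ⊕ Fin n)) := by
      simp [Sym2.eq_iff]
    rw [Finset.sum_pair hne]
    simp only [fL_v, gL_vv, gL_uv, if_pos hi0, if_neg hilast, hip, Fin.val_mk]
    rw [Nat.min_eq_left (by omega)]
    ring
  · rcases Nat.lt_or_ge i.val (n-1) with hilast | hilast
    · -- middle vertex
      have hi0' : (i:ℕ) ≠ 0 := by omega
      have hil' : (i:ℕ) ≠ n-1 := by omega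
      set im : Fin n := ⟨(i:ℕ)-1, by omega⟩ with him
      set ip : Fin n := ⟨(i:ℕ)+1, by omega⟩ with hip
      have hS : ∀ z, (z ∈ (ladder n).edgeSet ∧ (inr i : Fin n ⊕ Fin n) ∈ z) ↔
          z ∈ ({s(inr im, inr i), s(inr i, inr ip), s(inl i, inr i)} :
            Finset (Sym2 (Fin n ⊕ Fin n))) := by
        intro z
        constructor
        · rintro ⟨hz, hv⟩
          rcases edge_char hz with ⟨p,q,hpq,rfl⟩|⟨p,q,hpq,rfl⟩|⟨p,rfl⟩
          · rw [Sym2.mem_iff] at hv; rcases hv with h|h <;> simp at h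
          · rw [Sym2.mem_iff] at hv
            rcases hv with h|h <;> rw [inr.injEq] at h <;> subst h
            · have hq : q = ip := Fin.ext (by simp [hip]; omega)
              subst hq; simp
            · have hp : p = im := Fin.ext (by simp [him]; omega)
              subst hp; simp
          · rw [Sym2.mem_iff] at hv
            rcases hv with h|h
            · simp at h
            · rw [inr.injEq] at h; subst h; simp
        · intro hz
          rw [Finset.mem_insert, Finset.mem_insert, Finset.mem_singleton] at hz
          rcases hz with rfl|rfl|rfl
          · exact ⟨(SimpleGraph.mem_edgeSet _).mpr (adj_vv (by simp [him]; omega)), by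
              rw [Sym2.mem_iff]; right; rfl⟩
          · exact ⟨(SimpleGraph.mem_edgeSet _).mpr (adj_vv (by simp [hip])), by
              rw [Sym2.mem_iff]; left; rfl⟩
          · exact ⟨(SimpleGraph.mem_edgeSet _).mpr adj_uv, by rw [Sym2.mem_iff]; right; rfl⟩
      rw [vertexWt_gen (ladder n) (fL n) (gL n) (fun e => rfl) _ _ hS]
      have h1 : s(inr im, (inr i : Fin n ⊕ Fin n)) ∉
          ({s(inr i, inr ip), s(inl i, inr i)} : Finset (Sym2 (Fin n ⊕ Fin n))) := by
        simp [Sym2.eq_iff, him, hip, Fin.ext_iff] <;> omega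
      have h2 : s(inr i, (inr ip : Fin n ⊕ Fin n)) ∉
          ({s(inl i, inr i)} : Finset (Sym2 (Fin n ⊕ Fin n))) := by
        simp [Sym2.eq_iff]
      rw [Finset.sum_insert h1, Finset.sum_insert h2, Finset.sum_singleton]
      simp only [fL_v, gL_vv, gL_uv, if_neg hi0', if_neg hil', him, hip, Fin.val_mk]
      rw [Nat.min_eq_left (by omega), Nat.min_eq_left (by omega)]
      ring
    · -- last vertex
      have hil : (i:ℕ) = n-1 := by omega
      have hi0' : (i:ℕ) ≠ 0 := by omega
      set im : Fin n := ⟨(i:ℕ)-1, by omega⟩ with him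
      have hS : ∀ z, (z ∈ (ladder n).edgeSet ∧ (inr i : Fin n ⊕ Fin n) ∈ z) ↔
          z ∈ ({s(inr im, inr i), s(inl i, inr i)} : Finset (Sym2 (Fin n ⊕ Fin n))) := by
        intro z
        constructor
        · rintro ⟨hz, hv⟩
          rcases edge_char hz with ⟨p,q,hpq,rfl⟩|⟨p,q,hpq,rfl⟩|⟨p,rfl⟩
          · rw [Sym2.mem_iff] at hv; rcases hv with h|h <;> simp at h
          · rw [Sym2.mem_iff] at hv
            rcases hv with h|h <;> rw [inr.injEq] at h <;> subst h
            · exfalso; omega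
            · have hp : p = im := Fin.ext (by simp [him]; omega)
              subst hp; simp
          · rw [Sym2.mem_iff] at hv
            rcases hv with h|h
            · simp at h
            · rw [inr.injEq] at h; subst h; simp
        · intro hz
          rw [Finset.mem_insert, Finset.mem_singleton] at hz
          rcases hz with rfl|rfl
          · exact ⟨(SimpleGraph.mem_edgeSet _).mpr (adj_vv (by simp [him]; omega)), by
              rw [Sym2.mem_iff]; right; rfl⟩
          · exact ⟨(SimpleGraph.mem_edgeSet _).mpr adj_uv, by rw [Sym2.mem_iff]; right; rfl⟩
      rw [vertexWt_gen (ladder n) (fL n) (gL n) (fun e => rfl) _ _ hS]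
      have hne : s(inr im, (inr i : Fin n ⊕ Fin n)) ≠ s(inl i, inr i) := by
        simp [Sym2.eq_iff]
      rw [Finset.sum_pair hne]
      simp only [fL_v, gL_vv, gL_uv, if_neg hi0', if_pos hil, him, Fin.val_mk]
      rw [Nat.min_eq_left (by omega)]
      ring

lemma hne_uu {n : ℕ} {p q : Fin n} (hpq : (p:ℕ)+1 = q) :
    (inl p : Fin n ⊕ Fin n) ≠ inl q := by
  intro hh; rw [inl.injEq] at hh; subst hh; omega

lemma hne_vv {n : ℕ} {p q : Fin n} (hpq : (p:ℕ)+1 = q) :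
    (inr p : Fin n ⊕ Fin n) ≠ inr q := by
  intro hh; rw [inr.injEq] at hh; subst hh; omega

lemma hne_uv {n : ℕ} {p q : Fin n} : (inl p : Fin n ⊕ Fin n) ≠ inr q := by simp

lemma vwt_inj (n : ℕ) (hn : 2 ≤ n) : Function.Injective (vertexWt (ladder n) (fL n)) := by
  rintro (i|i) (j|j) h
  · rw [vwt_u n hn i, vwt_u n hn j] at h
    have hi := i.is_lt; have hj := j.is_lt
    refine congrArg inl (Fin.ext ?_)
    simp only [uL, rL, sL] at h
    split_ifs at h <;> omega
  · rw [vwt_u n hn i, vwt_v n hn j] at h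
    have hi := i.is_lt; have hj := j.is_lt
    exfalso
    simp only [uL, vL, rL, sL, tL] at h
    split_ifs at h <;> omega
  · rw [vwt_v n hn i, vwt_u n hn j] at h
    have hi := i.is_lt; have hj := j.is_lt
    exfalso
    simp only [uL, vL, rL, sL, tL] at h
    split_ifs at h <;> omega
  · rw [vwt_v n hn i, vwt_v n hn j] at h
    have hi := i.is_lt; have hj := j.is_lt
    refine congrArg inr (Fin.ext ?_)
    simp only [vL, rL, tL] at h
    split_ifs at h <;> omega

lemma ewt_inj (n : ℕ) (hn : 2 ≤ n) : Function.Injective (edgeWt (ladder n) (fL n)) := by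
  intro e1 e2 h
  have key : (e1 : Sym2 (Fin n ⊕ Fin n)) = (e2 : Sym2 (Fin n ⊕ Fin n)) := by
    rcases edge_char e1.2 with ⟨p,q,hpq,hv1⟩|⟨p,q,hpq,hv1⟩|⟨p,hv1⟩ <;>
      rcases edge_char e2.2 with ⟨p',q',hpq',hv2⟩|⟨p',q',hpq',hv2⟩|⟨p',hv2⟩
    · rw [edgeWt_gen _ _ e1 (hne_uu hpq) hv1, edgeWt_gen _ _ e2 (hne_uu hpq') hv2] at h
      simp only [fL_e, hv1, hv2, fL_u, gL_uu, uL, sL] at h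
      rw [hv1, hv2]
      have : (p:ℕ) = p' ∧ (q:ℕ) = q' := by
        have hp := p.is_lt; have hq := q.is_lt; have hp' := p'.is_lt; have hq' := q'.is_lt
        omega
      rw [Fin.ext this.1, Fin.ext this.2]
    · rw [edgeWt_gen _ _ e1 (hne_uu hpq) hv1, edgeWt_gen _ _ e2 (hne_vv hpq') hv2] at h
      simp only [fL_e, hv1, hv2, fL_u, fL_v, gL_uu, gL_vv, uL, vL, sL, tL] at h
      exfalso
      have hp := p.is_lt; have hq := q.is_lt; have hp' := p'.is_lt; have hq' := q'.is_lt
      split_ifs at h <;> omega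
    · rw [edgeWt_gen _ _ e1 (hne_uu hpq) hv1, edgeWt_gen _ _ e2 hne_uv hv2] at h
      simp only [fL_e, hv1, hv2, fL_u, fL_v, gL_uu, gL_uv, uL, vL, sL, rL] at h
      exfalso
      have hp := p.is_lt; have hq := q.is_lt; have hp' := p'.is_lt
      split_ifs at h <;> omega
    · rw [edgeWt_gen _ _ e1 (hne_vv hpq) hv1, edgeWt_gen _ _ e2 (hne_uu hpq') hv2] at h
      simp only [fL_e, hv1, hv2, fL_u, fL_v, gL_uu, gL_vv, uL, vL, sL, tL] at h
      exfalso
      have hp := p.is_lt; have hq := q.is_lt; have hp' := p'.is_lt; have hq' := q'.is_lt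
      split_ifs at h <;> omega
    · rw [edgeWt_gen _ _ e1 (hne_vv hpq) hv1, edgeWt_gen _ _ e2 (hne_vv hpq') hv2] at h
      simp only [fL_e, hv1, hv2, fL_v, gL_vv, vL, tL] at h
      rw [hv1, hv2]
      have : (p:ℕ) = p' ∧ (q:ℕ) = q' := by
        have hp := p.is_lt; have hq := q.is_lt; have hp' := p'.is_lt; have hq' := q'.is_lt
        split_ifs at h <;> omega
      rw [Fin.ext this.1, Fin.ext this.2]
    · rw [edgeWt_gen _ _ e1 (hne_vv hpq) hv1, edgeWt_gen _ _ e2 hne_uv hv2] at h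
      simp only [fL_e, hv1, hv2, fL_u, fL_v, gL_vv, gL_uv, uL, vL, tL, rL] at h
      exfalso
      have hp := p.is_lt; have hq := q.is_lt; have hp' := p'.is_lt
      split_ifs at h <;> omega
    · rw [edgeWt_gen _ _ e1 hne_uv hv1, edgeWt_gen _ _ e2 (hne_uu hpq') hv2] at h
      simp only [fL_e, hv1, hv2, fL_u, fL_v, gL_uu, gL_uv, uL, vL, sL, rL] at h
      exfalso
      have hp := p.is_lt; have hp' := p'.is_lt; have hq' := q'.is_lt
      split_ifs at h <;> omega
    · rw [edgeWt_gen _ _ e1 hne_uv hv1, edgeWt_gen _ _ e2 (hne_vv hpq') hv2] at h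
      simp only [fL_e, hv1, hv2, fL_u, fL_v, gL_vv, gL_uv, uL, vL, tL, rL] at h
      exfalso
      have hp := p.is_lt; have hp' := p'.is_lt; have hq' := q'.is_lt
      split_ifs at h <;> omega
    · rw [edgeWt_gen _ _ e1 hne_uv hv1, edgeWt_gen _ _ e2 hne_uv hv2] at h
      simp only [fL_e, hv1, hv2, fL_u, fL_v, gL_uv, uL, vL, rL] at h
      rw [hv1, hv2]
      have : (p:ℕ) = p' := by
        have hp := p.is_lt; have hp' := p'.is_lt
        split_ifs at h <;> omega
      rw [Fin.ext this]
  exact Subtype.ext key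

lemma fL_vertex_bij (n : ℕ) (hn : 2 ≤ n) :
    Set.BijOn (fun v => fL n (inl v)) Set.univ (Set.Icc 1 (2*n)) := by
  refine ⟨?_, ?_, ?_⟩
  · rintro (i|i) -
    · have := i.is_lt; simp only [fL_u, uL, Set.mem_Icc]; omega
    · have := i.is_lt; simp only [fL_v, vL, Set.mem_Icc]; omega
  · rintro (i|i) - (j|j) - h <;>
      (have hi := i.is_lt; have hj := j.is_lt;
       simp only [fL_u, fL_v, uL, vL] at h)
    · exact congrArg inl (Fin.ext (by omega))
    · exfalso; omega
    · exfalso; omega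
    · exact congrArg inr (Fin.ext (by omega))
  · intro m hm
    rw [Set.mem_Icc] at hm
    rcases Nat.lt_or_ge m (n+1) with hc | hc
    · exact ⟨inl ⟨n-m, by omega⟩, Set.mem_univ _,
        by simp only [fL_u, uL, Fin.val_mk]; omega⟩
    · exact ⟨inr ⟨m-n-1, by omega⟩, Set.mem_univ _,
        by simp only [fL_v, vL, Fin.val_mk]; omega⟩

lemma edge_label_bounds (n : ℕ) (hn : 2 ≤ n) (e : (ladder n).edgeSet) :
    2*n+1 ≤ fL n (inr e) ∧ fL n (inr e) ≤ 5*n-2 := by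
  rcases edge_char e.2 with ⟨p,q,hpq,hv⟩|⟨p,q,hpq,hv⟩|⟨p,hv⟩ <;>
    simp only [fL_e, hv, gL_uu, gL_vv, gL_uv, sL, rL, tL]
  · have hq := q.is_lt; constructor <;> omega
  · have hq := q.is_lt; split_ifs <;> constructor <;> omega
  · have hp := p.is_lt; split_ifs <;> constructor <;> omega

lemma fL_bij (n : ℕ) (hn : 2 ≤ n) :
    Set.BijOn (fL n) Set.univ (Set.Icc 1 (5*n-2)) := by
  have hvb := fL_vertex_bij n hn
  refine ⟨?_, ?_, ?_⟩
  · rintro (v|e) -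
    · have h1 : 1 ≤ fL n (inl v) ∧ fL n (inl v) ≤ 2*n :=
        Set.mem_Icc.mp (hvb.1 (Set.mem_univ v))
      rw [Set.mem_Icc]
      omega
    · have := edge_label_bounds n hn e
      rw [Set.mem_Icc]
      omega
  · rintro (v|e) - (w|e') - h
    · exact congrArg inl (hvb.2.1 (Set.mem_univ v) (Set.mem_univ w) h)
    · exfalso
      have h1 : 1 ≤ fL n (inl v) ∧ fL n (inl v) ≤ 2*n :=
        Set.mem_Icc.mp (hvb.1 (Set.mem_univ v))
      have h2 := edge_label_bounds n hn e'
      omega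
    · exfalso
      have h1 : 1 ≤ fL n (inl w) ∧ fL n (inl w) ≤ 2*n :=
        Set.mem_Icc.mp (hvb.1 (Set.mem_univ w))
      have h2 := edge_label_bounds n hn e
      omega
    · refine congrArg inr (Subtype.ext ?_)
      rcases edge_char e.2 with ⟨p,q,hpq,hv1⟩|⟨p,q,hpq,hv1⟩|⟨p,hv1⟩ <;>
        rcases edge_char e'.2 with ⟨p',q',hpq',hv2⟩|⟨p',q',hpq',hv2⟩|⟨p',hv2⟩ <;>
        simp only [fL_e, hv1, hv2, gL_uu, gL_vv, gL_uv, sL, rL, tL] at h <;>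
        rw [hv1, hv2] <;>
        [skip; skip; skip; skip; skip; skip; skip; skip; skip]
      · have hq := q.is_lt; have hq' := q'.is_lt
        have : (p:ℕ) = p' ∧ (q:ℕ) = q' := by omega
        rw [Fin.ext this.1, Fin.ext this.2]
      · exfalso; have hq := q.is_lt; have hq' := q'.is_lt; split_ifs at h <;> omega
      · exfalso; have hq := q.is_lt; have hp' := p'.is_lt; split_ifs at h <;> omega
      · exfalso; have hq := q.is_lt; have hq' := q'.is_lt; split_ifs at h <;> omega
      · have hq := q.is_lt; have hq' := q'.is_lt
        have : (p:ℕ) = p' ∧ (q:ℕ) = q' := by split_ifs at h <;> omega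
        rw [Fin.ext this.1, Fin.ext this.2]
      · exfalso; have hq := q.is_lt; have hp' := p'.is_lt; split_ifs at h <;> omega
      · exfalso; have hp := p.is_lt; have hq' := q'.is_lt; split_ifs at h <;> omega
      · exfalso; have hp := p.is_lt; have hq' := q'.is_lt; split_ifs at h <;> omega
      · have hp := p.is_lt; have hp' := p'.is_lt
        have : (p:ℕ) = p' := by split_ifs at h <;> omega
        rw [Fin.ext this]
  · intro m hm
    rw [Set.mem_Icc] at hm
    rcases Nat.lt_or_ge m (2*n+1) with hc | hc
    · obtain ⟨v, -, hv⟩ := hvb.2.2 (Set.mem_Icc.mpr ⟨hm.1, by omega⟩)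
      exact ⟨inl v, Set.mem_univ _, hv⟩
    · rcases Nat.lt_or_ge m (3*n) with hc2 | hc2
      · refine ⟨inr ⟨s(inl ⟨m-2*n-1, by omega⟩, inl ⟨m-2*n, by omega⟩),
          (SimpleGraph.mem_edgeSet _).mpr (adj_uu (by simp only [Fin.val_mk]; omega))⟩,
          Set.mem_univ _, ?_⟩
        · simp only [fL_e, gL_uu, sL, Fin.val_mk]
          omega
      · by_cases hn2 : n = 2
        · subst hn2
          have : m = 6 ∨ m = 7 ∨ m = 8 := by omega
          rcases this with rfl|rfl|rfl
          · exact ⟨inr ⟨s(inl ⟨0, by omega⟩, inr ⟨0, by omega⟩),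
              (SimpleGraph.mem_edgeSet _).mpr adj_uv⟩, Set.mem_univ _, by
                simp [gL_uv, rL]⟩
          · exact ⟨inr ⟨s(inr ⟨0, by omega⟩, inr ⟨1, by omega⟩),
              (SimpleGraph.mem_edgeSet _).mpr (adj_vv (by simp))⟩, Set.mem_univ _, by
                simp [gL_vv, tL]⟩
          · exact ⟨inr ⟨s(inl ⟨1, by omega⟩, inr ⟨1, by omega⟩),
              (SimpleGraph.mem_edgeSet _).mpr adj_uv⟩, Set.mem_univ _, by
                simp [gL_uv, rL]⟩
        · rcases Nat.lt_or_ge m (4*n) with hc3 | hc3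
          · refine ⟨inr ⟨s(inl ⟨m-3*n, by omega⟩, inr ⟨m-3*n, by omega⟩),
              (SimpleGraph.mem_edgeSet _).mpr adj_uv⟩, Set.mem_univ _, ?_⟩
            simp only [fL_e, gL_uv, rL, Fin.val_mk, if_neg hn2]
            omega
          · refine ⟨inr ⟨s(inr ⟨m-4*n, by omega⟩, inr ⟨m-4*n+1, by omega⟩),
              (SimpleGraph.mem_edgeSet _).mpr (adj_vv (by simp only [Fin.val_mk]))⟩,
              Set.mem_univ _, ?_⟩
            simp only [fL_e, gL_vv, tL, Fin.val_mk, if_neg hn2]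
            omega

/-- For every `n ≥ 2` the ladder `L_n` is a super totally antimagic total graph:
there is a bijection from `V ∪ E` onto `{1, …, 5n-2}` sending the vertices onto
`{1, …, 2n}`, with pairwise distinct edge-weights and pairwise distinct vertex-weights. -/
theorem ladder_super_TAT (n : ℕ) (hn : 2 ≤ n) :
    ∃ f : (Fin n ⊕ Fin n) ⊕ (ladder n).edgeSet → ℕ,
      Set.BijOn f Set.univ (Set.Icc 1 (5 * n - 2)) ∧
      Set.BijOn (fun v => f (inl v)) Set.univ (Set.Icc 1 (2 * n)) ∧
      Function.Injective (edgeWt (ladder n) f) ∧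
      Function.Injective (vertexWt (ladder n) f) :=
  ⟨fL n, fL_bij n hn, fL_vertex_bij n hn, ewt_inj n hn, vwt_inj n hn⟩
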